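/- If a₂ = a₄ = 0 and (a₁−a₃)(2a₁+a₃) > 0, then the Lie algebra g(a₁,0,a₃,0) is isomorphic as a real Lie algebra to so(3,ℝ) × so(3,ℝ). (This is the Lie-algebra form of Proposition 4(c): the Lie group G(a₁,0,a₃,0) is locally isomorphic to S³ × S³.) -/

import Mathlib

/-!
For `a₂ = a₄ = 0` put `p = 2a₁ + a₃` and choose `k > 0` with `k² = 2(a₁ − a₃)p`. The two maps
`x ↦ (k(x₁ + x₄), k(x₂ + x₃), p x₅ + x₆)` and `x ↦ (k(x₁ − x₄), k(x₃ − x₂), p x₅ − x₆)`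
together identify `g(a₁,0,a₃,0)` with two commuting copies of `(ℝ³, ×)`; the choice of `k` is
exactly what makes `[X₁,X₂]` and `[X₃,X₄]`, multiples of `X₆`, come out right.
Finally `u ↦ (v ↦ u × v)` is an isomorphism `(ℝ³, ×) ≅ so(3)`, compatible with brackets by the
Jacobi identity of the cross product.
-/

open scoped Matrix

/-- The Lie bracket of the 6-dimensional Lie algebra `g(a₁,a₂,a₃,a₄)` of Puhle's paper,
written on `ℝ⁶` with the basis `X₁,…,X₆` corresponding to the 0-based coordinates `0,…,5`.
Here `p = 2a₁+a₃`, `q = 2a₂+a₄`, `r = a₁−a₃`, `s = a₂−a₄`,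
`α = −2(rp + sq)`, and the bracket is determined by `[X₆,X₁]=X₂`, `[X₆,X₂]=−X₁`,
`[X₆,X₃]=−X₄`, `[X₆,X₄]=X₃`, `[X₁,X₅]=−p·X₃−q·X₄`, `[X₂,X₅]=−q·X₃+p·X₄`,
`[X₃,X₅]=p·X₁+q·X₂`, `[X₄,X₅]=q·X₁−p·X₂`, `[X₁,X₃]=2r·X₅`, `[X₂,X₄]=−2r·X₅`,
`[X₁,X₄]=2s·X₅`, `[X₂,X₃]=2s·X₅`, `[X₁,X₂]=−α·X₆`, `[X₃,X₄]=α·X₆`,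
all other brackets of basis vectors being zero. -/
def gBracket (a₁ a₂ a₃ a₄ : ℝ) (x y : Fin 6 → ℝ) : Fin 6 → ℝ :=
  let p := 2 * a₁ + a₃
  let q := 2 * a₂ + a₄
  let r := a₁ - a₃
  let s := a₂ - a₄
  let α := -2 * (r * p + s * q)
  let w : Fin 6 → Fin 6 → ℝ := fun i j => x i * y j - x j * y i
  ![p * w 2 4 + q * w 3 4 + w 1 5,
    q * w 2 4 - p * w 3 4 - w 0 5,
    -(p * w 0 4) - q * w 1 4 - w 3 5,
    -(q * w 0 4) + p * w 1 4 + w 2 5,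
    2 * r * (w 0 2 - w 1 3) + 2 * s * (w 0 3 + w 1 2),
    -(α * w 0 1) + α * w 2 3]

namespace LieAlgebra.Orthogonal

variable {R : Type*} [CommRing R]

attribute [local instance] LieRing.ofAssociativeRing

def crossMatrix : (Fin 3 → R) →ₗ[R] Matrix (Fin 3) (Fin 3) R :=
  LinearMap.toMatrix'.toLinearMap ∘ₗ crossProduct

lemma crossMatrix_apply (u : Fin 3 → R) :
    crossMatrix u = !![0, -u 2, u 1; u 2, 0, -u 0; -u 1, u 0, 0] := by
  ext i j
  fin_cases i <;> fin_cases j <;> simp [crossMatrix, LinearMap.toMatrix'_apply, cross_apply]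

lemma crossMatrix_mem_so (u : Fin 3 → R) : crossMatrix u ∈ so (Fin 3) R := by
  rw [mem_so, crossMatrix_apply]
  ext i j
  fin_cases i <;> fin_cases j <;> simp

lemma crossMatrix_cross (u v : Fin 3 → R) :
    crossMatrix (u ⨯₃ v) = ⁅crossMatrix u, crossMatrix v⁆ := by
  simp only [crossMatrix, LinearMap.comp_apply, LinearEquiv.coe_coe, Ring.lie_def,
    ← LinearMap.toMatrix'_mul, ← map_sub]
  exact congrArg _ (LinearMap.ext (cross_cross u v))

lemma crossMatrix_injective : Function.Injective (crossMatrix (R := R)) := by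
  intro u v huv
  have h := congrArg (fun A : Matrix (Fin 3) (Fin 3) R => ![A 2 1, A 0 2, A 1 0]) huv
  simpa [crossMatrix_apply, funext_iff, Fin.forall_fin_succ] using h

lemma crossMatrix_of_mem_so [IsAddTorsionFree R] {A : Matrix (Fin 3) (Fin 3) R}
    (hA : A ∈ so (Fin 3) R) : crossMatrix ![A 2 1, A 0 2, A 1 0] = A := by
  ext i j
  have hij := congrFun (congrFun ((mem_so _ _ _).1 hA) i) j
  fin_cases i <;> fin_cases j <;> simp [crossMatrix_apply, self_eq_neg] at hij ⊢ <;>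
    linear_combination -hij

noncomputable def crossMatrixEquiv [IsAddTorsionFree R] : (Fin 3 → R) ≃ₗ[R] so (Fin 3) R :=
  LinearEquiv.ofBijective
    (LinearMap.codRestrict (so (Fin 3) R).toSubmodule crossMatrix crossMatrix_mem_so)
    ⟨fun _ _ h => crossMatrix_injective (congrArg Subtype.val h),
      fun A => ⟨_, Subtype.ext (crossMatrix_of_mem_so A.2)⟩⟩

lemma crossMatrixEquiv_cross [IsAddTorsionFree R] (u v : Fin 3 → R) :
    crossMatrixEquiv (u ⨯₃ v) = ⁅crossMatrixEquiv u, crossMatrixEquiv v⁆ :=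
  Subtype.ext (crossMatrix_cross u v)

end LieAlgebra.Orthogonal

open LieAlgebra.Orthogonal

def gSplit (k p : ℝ) : (Fin 6 → ℝ) →ₗ[ℝ] (Fin 3 → ℝ) × (Fin 3 → ℝ) :=
  (Matrix.toLin' !![k, 0, 0, k, 0, 0; 0, k, k, 0, 0, 0; 0, 0, 0, 0, p, 1]).prod
    (Matrix.toLin' !![k, 0, 0, -k, 0, 0; 0, -k, k, 0, 0, 0; 0, 0, 0, 0, p, -1])

lemma gSplit_apply (k p : ℝ) (x : Fin 6 → ℝ) :
    gSplit k p x = (![k * (x 0 + x 3), k * (x 1 + x 2), p * x 4 + x 5],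
      ![k * (x 0 - x 3), k * (x 2 - x 1), p * x 4 - x 5]) := by
  ext i <;> fin_cases i <;> simp [gSplit, dotProduct, Fin.sum_univ_succ] <;> ring

lemma gSplit_injective {k p : ℝ} (hk : k ≠ 0) (hp : p ≠ 0) :
    Function.Injective (gSplit k p) := by
  rw [← LinearMap.ker_eq_bot, LinearMap.ker_eq_bot']
  intro x hx
  obtain ⟨⟨h03, h12, h45⟩, ⟨h03', h12', h45'⟩⟩ :
      (x 0 + x 3 = 0 ∧ x 1 + x 2 = 0 ∧ p * x 4 + x 5 = 0) ∧
        (x 0 - x 3 = 0 ∧ x 2 - x 1 = 0 ∧ p * x 4 - x 5 = 0) := by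
    simpa [gSplit_apply, Prod.ext_iff, funext_iff, Fin.forall_fin_succ, hk] using hx
  have h4 : x 4 = 0 := by simpa [hp] using (by linarith : p * x 4 = 0)
  ext i
  fin_cases i <;> simp <;> linarith

lemma gSplit_gBracket {a₁ a₃ k : ℝ} (hk : k ^ 2 = 2 * ((a₁ - a₃) * (2 * a₁ + a₃)))
    (x y : Fin 6 → ℝ) :
    gSplit k (2 * a₁ + a₃) (gBracket a₁ 0 a₃ 0 x y) =
      ((gSplit k (2 * a₁ + a₃) x).1 ⨯₃ (gSplit k (2 * a₁ + a₃) y).1,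
        (gSplit k (2 * a₁ + a₃) x).2 ⨯₃ (gSplit k (2 * a₁ + a₃) y).2) := by
  simp only [gSplit_apply, cross_apply]
  ext i <;> fin_cases i <;> simp [gBracket]
  · ring
  · ring
  · linear_combination ((x 1 + x 2) * (y 0 + y 3) - (x 0 + x 3) * (y 1 + y 2)) * hk
  · ring
  · ring
  · linear_combination ((x 2 - x 1) * (y 0 - y 3) - (x 0 - x 3) * (y 2 - y 1)) * hk

noncomputable def gSplitEquiv {k p : ℝ} (hk : k ≠ 0) (hp : p ≠ 0) :
    (Fin 6 → ℝ) ≃ₗ[ℝ] (Fin 3 → ℝ) × (Fin 3 → ℝ) :=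
  (gSplit k p).linearEquivOfInjective (gSplit_injective hk hp) (by simp)

/-- If `a₂ = a₄ = 0` and `(a₁−a₃)(2a₁+a₃) > 0`, the Lie algebra `g(a₁,0,a₃,0)` is isomorphic,
as a real Lie algebra, to `so(3,ℝ) × so(3,ℝ)` (Proposition 4(c) of Puhle's paper). -/
theorem g_iso_so3_prod_so3_of_pos (a₁ a₃ : ℝ) (h : (a₁ - a₃) * (2 * a₁ + a₃) > 0) :
    ∃ e : (Fin 6 → ℝ) ≃ₗ[ℝ]
        (LieAlgebra.Orthogonal.so (Fin 3) ℝ × LieAlgebra.Orthogonal.so (Fin 3) ℝ),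
      ∀ x y : Fin 6 → ℝ,
        (e (gBracket a₁ 0 a₃ 0 x y)).1 = ⁅(e x).1, (e y).1⁆
          ∧ (e (gBracket a₁ 0 a₃ 0 x y)).2 = ⁅(e x).2, (e y).2⁆ := by
  set k := √(2 * ((a₁ - a₃) * (2 * a₁ + a₃)))
  have hk : k ^ 2 = 2 * ((a₁ - a₃) * (2 * a₁ + a₃)) := Real.sq_sqrt (by positivity)
  have hk0 : k ≠ 0 := (Real.sqrt_pos.2 (by positivity)).ne'
  have hp : 2 * a₁ + a₃ ≠ 0 := right_ne_zero_of_mul h.ne'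
  refine ⟨(gSplitEquiv hk0 hp).trans (crossMatrixEquiv.prodCongr crossMatrixEquiv), fun x y => ?_⟩
  simp [gSplitEquiv, gSplit_gBracket hk, crossMatrixEquiv_cross]
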